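/- Let Δ be a finite connected graph with two voltage assignments γ_i : E_Δ → G_i (i = 1, 2), both condensed with respect to the same spanning tree set S, where G_i = ⟨γ_i(E_Δ)⟩ is the group generated by the voltages. Let Γ_i = Δ ×_{γ_i} G_i be the derived graphs with canonical coverings φ_i : Γ_i → Δ. Then there exists a graph isomorphism ψ : Γ₁ → Γ₂ with φ₂∘ψ = φ₁ if and only if the correspondence γ₁(e) ↦ γ₂(e) (for e ∈ E_Δ) is a well-defined map on the voltage values that extends to a group isomorphism of G₁ onto G₂. -/

import Mathlib

namespace VG

/-- A graph (directed multigraph): vertices, edges, initial and terminal endpoint maps. -/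
structure MGraph : Type 1 where
  V : Type
  E : Type
  ι : E → V
  τ : E → V

/-- A homomorphism of graphs. -/
structure Hom (Γ Δ : MGraph) where
  onV : Γ.V → Δ.V
  onE : Γ.E → Δ.E
  map_ι : ∀ e, Δ.ι (onE e) = onV (Γ.ι e)
  map_τ : ∀ e, Δ.τ (onE e) = onV (Γ.τ e)

/-- Composition of homomorphisms. -/
def Hom.comp {Γ₁ Γ₂ Γ₃ : MGraph} (g : Hom Γ₂ Γ₃) (f : Hom Γ₁ Γ₂) : Hom Γ₁ Γ₃ where
  onV := g.onV ∘ f.onV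
  onE := g.onE ∘ f.onE
  map_ι e := by simp only [Function.comp_apply]; rw [g.map_ι, f.map_ι]
  map_τ e := by simp only [Function.comp_apply]; rw [g.map_τ, f.map_τ]

/-- An isomorphism of graphs: a homomorphism bijective on vertices and on edges. -/
structure Iso (Γ Δ : MGraph) where
  onV : Γ.V ≃ Δ.V
  onE : Γ.E ≃ Δ.E
  map_ι : ∀ e, Δ.ι (onE e) = onV (Γ.ι e)
  map_τ : ∀ e, Δ.τ (onE e) = onV (Γ.τ e)

def Iso.toHom {Γ Δ : MGraph} (f : Iso Γ Δ) : Hom Γ Δ :=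
  ⟨f.onV, f.onE, f.map_ι, f.map_τ⟩

/-- The automorphisms of a graph. -/
abbrev Aut (Γ : MGraph) := Iso Γ Γ

theorem Iso.ext' {Γ Δ : MGraph} {f g : Iso Γ Δ} (hV : f.onV = g.onV) (hE : f.onE = g.onE) :
    f = g := by
  cases f; cases g; cases hV; cases hE; rfl

instance (Γ : MGraph) : Group (Aut Γ) where
  one := ⟨Equiv.refl _, Equiv.refl _, fun _ => rfl, fun _ => rfl⟩
  mul g h := ⟨h.onV.trans g.onV, h.onE.trans g.onE,
    fun e => by simp only [Equiv.trans_apply]; rw [g.map_ι, h.map_ι],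
    fun e => by simp only [Equiv.trans_apply]; rw [g.map_τ, h.map_τ]⟩
  inv g := ⟨g.onV.symm, g.onE.symm,
    fun e => by
      have h := g.map_ι (g.onE.symm e)
      rw [Equiv.apply_symm_apply] at h
      rw [h, Equiv.symm_apply_apply],
    fun e => by
      have h := g.map_τ (g.onE.symm e)
      rw [Equiv.apply_symm_apply] at h
      rw [h, Equiv.symm_apply_apply]⟩
  mul_assoc a b c := Iso.ext' (Equiv.ext fun _ => rfl) (Equiv.ext fun _ => rfl)
  one_mul a := Iso.ext' (Equiv.ext fun _ => rfl) (Equiv.ext fun _ => rfl)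
  mul_one a := Iso.ext' (Equiv.ext fun _ => rfl) (Equiv.ext fun _ => rfl)
  inv_mul_cancel a :=
    Iso.ext' (Equiv.ext fun x => a.onV.symm_apply_apply x)
      (Equiv.ext fun x => a.onE.symm_apply_apply x)

theorem Aut.mul_onV {Γ : MGraph} (g h : Aut Γ) (v : Γ.V) : (g * h).onV v = g.onV (h.onV v) := rfl
theorem Aut.mul_onE {Γ : MGraph} (g h : Aut Γ) (e : Γ.E) : (g * h).onE e = g.onE (h.onE e) := rfl
theorem Aut.one_onV {Γ : MGraph} (v : Γ.V) : (1 : Aut Γ).onV v = v := rfl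
theorem Aut.inv_onV {Γ : MGraph} (g : Aut Γ) (v : Γ.V) : g⁻¹.onV v = g.onV.symm v := rfl

/-- The outset of a vertex. -/
def Out (Γ : MGraph) (v : Γ.V) : Set Γ.E := {e | Γ.ι e = v}

/-- The inset of a vertex. -/
def In (Γ : MGraph) (v : Γ.V) : Set Γ.E := {e | Γ.τ e = v}

/-- A covering: a surjective homomorphism restricting to bijections on out-sets and in-sets. -/
structure IsCovering {Γ Δ : MGraph} (φ : Hom Γ Δ) : Prop where
  surjV : Function.Surjective φ.onV
  surjE : Function.Surjective φ.onE
  bijOut : ∀ v : Γ.V, Set.BijOn φ.onE (Out Γ v) (Out Δ (φ.onV v))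
  bijIn : ∀ v : Γ.V, Set.BijOn φ.onE (In Γ v) (In Δ (φ.onV v))

/-- The cover group of a covering: automorphisms `g` of `Γ` with `φ ∘ g = φ`. -/
def coverGroup {Γ Δ : MGraph} (φ : Hom Γ Δ) : Subgroup (Aut Γ) where
  carrier := {g | (∀ v, φ.onV (g.onV v) = φ.onV v) ∧ (∀ e, φ.onE (g.onE e) = φ.onE e)}
  one_mem' := ⟨fun _ => rfl, fun _ => rfl⟩
  mul_mem' := by
    rintro g h ⟨hgV, hgE⟩ ⟨hhV, hhE⟩
    exact ⟨fun v => by rw [Aut.mul_onV, hgV, hhV], fun e => by rw [Aut.mul_onE, hgE, hhE]⟩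
  inv_mem' := by
    rintro g ⟨hgV, hgE⟩
    refine ⟨fun v => ?_, fun e => ?_⟩
    · have h := hgV (g.onV.symm v)
      rw [Equiv.apply_symm_apply] at h
      exact h.symm
    · have h := hgE (g.onE.symm e)
      rw [Equiv.apply_symm_apply] at h
      exact h.symm

theorem mem_coverGroup {Γ Δ : MGraph} {φ : Hom Γ Δ} {g : Aut Γ} :
    g ∈ coverGroup φ ↔ (∀ v, φ.onV (g.onV v) = φ.onV v) ∧ (∀ e, φ.onE (g.onE e) = φ.onE e) :=
  Iff.rfl

/-- A covering is regular if its cover group acts transitively on all fibers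
(of vertices and of edges). -/
def IsRegular {Γ Δ : MGraph} (φ : Hom Γ Δ) : Prop :=
  (∀ v w : Γ.V, φ.onV v = φ.onV w → ∃ g ∈ coverGroup φ, g.onV v = w) ∧
  (∀ e f : Γ.E, φ.onE e = φ.onE f → ∃ g ∈ coverGroup φ, g.onE e = f)

/-- The orbit equivalence on vertices induced by a subgroup of automorphisms. -/
def vSetoid (Γ : MGraph) (G : Subgroup (Aut Γ)) : Setoid Γ.V where
  r v w := ∃ g ∈ G, g.onV v = w
  iseqv := by
    refine ⟨fun v => ⟨1, one_mem _, rfl⟩, ?_, ?_⟩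
    · rintro v w ⟨g, hg, rfl⟩
      exact ⟨g⁻¹, inv_mem hg, g.onV.symm_apply_apply v⟩
    · rintro u v w ⟨g, hg, rfl⟩ ⟨h, hh, rfl⟩
      exact ⟨h * g, mul_mem hh hg, rfl⟩

/-- The orbit equivalence on edges induced by a subgroup of automorphisms. -/
def eSetoid (Γ : MGraph) (G : Subgroup (Aut Γ)) : Setoid Γ.E where
  r e f := ∃ g ∈ G, g.onE e = f
  iseqv := by
    refine ⟨fun e => ⟨1, one_mem _, rfl⟩, ?_, ?_⟩
    · rintro e f ⟨g, hg, rfl⟩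
      exact ⟨g⁻¹, inv_mem hg, g.onE.symm_apply_apply e⟩
    · rintro e f d ⟨g, hg, rfl⟩ ⟨h, hh, rfl⟩
      exact ⟨h * g, mul_mem hh hg, rfl⟩

/-- The quotient graph of `Γ` by a subgroup `G` of automorphisms. -/
def quotientGraph (Γ : MGraph) (G : Subgroup (Aut Γ)) : MGraph where
  V := Quotient (vSetoid Γ G)
  E := Quotient (eSetoid Γ G)
  ι := Quotient.map' Γ.ι (by rintro e f ⟨g, hg, rfl⟩; exact ⟨g, hg, (g.map_ι e).symm⟩)
  τ := Quotient.map' Γ.τ (by rintro e f ⟨g, hg, rfl⟩; exact ⟨g, hg, (g.map_τ e).symm⟩)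

/-- The canonical projection of a graph onto its quotient by a subgroup of automorphisms. -/
def quotientProj (Γ : MGraph) (G : Subgroup (Aut Γ)) : Hom Γ (quotientGraph Γ G) where
  onV := Quotient.mk (vSetoid Γ G)
  onE := Quotient.mk (eSetoid Γ G)
  map_ι e := rfl
  map_τ e := rfl

/-- A subgroup of automorphisms acts freely: nonidentity elements move every vertex. -/
def ActsFreely (Γ : MGraph) (G : Subgroup (Aut Γ)) : Prop :=
  ∀ g ∈ G, g ≠ 1 → ∀ v : Γ.V, g.onV v ≠ v

/-! ### Walks -/

/-- The vertex from which a step (edge together with a direction of traversal) departs. -/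
def stepSrc (Γ : MGraph) (s : Γ.E × Bool) : Γ.V := cond s.2 (Γ.ι s.1) (Γ.τ s.1)

/-- The vertex at which a step arrives. -/
def stepTgt (Γ : MGraph) (s : Γ.E × Bool) : Γ.V := cond s.2 (Γ.τ s.1) (Γ.ι s.1)

/-- A list of steps forms a chain starting at a given vertex. -/
def chain (Γ : MGraph) : Γ.V → List (Γ.E × Bool) → Prop
  | _, [] => True
  | v, s :: rest => stepSrc Γ s = v ∧ chain Γ (stepTgt Γ s) rest

/-- The final vertex after traversing a list of steps from a given vertex. -/
def endOf (Γ : MGraph) : Γ.V → List (Γ.E × Bool) → Γ.V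
  | v, [] => v
  | _, s :: rest => endOf Γ (stepTgt Γ s) rest

/-- A walk: an initial vertex and a compatible list of steps, each traversing an
edge either along (`true`) or against (`false`) its orientation. -/
structure Walk (Γ : MGraph) where
  first : Γ.V
  steps : List (Γ.E × Bool)
  ok : chain Γ first steps

/-- The terminal vertex of a walk. -/
def Walk.last {Γ : MGraph} (w : Walk Γ) : Γ.V := endOf Γ w.first w.steps

/-- Two vertices joined by a walk. -/
def Reachable (Γ : MGraph) (u v : Γ.V) : Prop :=
  ∃ w : Walk Γ, w.first = u ∧ w.last = v

/-- A graph is connected if any two vertices are joined by a walk. -/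
def Connected (Γ : MGraph) : Prop :=
  ∀ u v : Γ.V, Reachable Γ u v

def Hom.mapStep {Γ Δ : MGraph} (φ : Hom Γ Δ) (s : Γ.E × Bool) : Δ.E × Bool := (φ.onE s.1, s.2)

theorem Hom.stepSrc_map {Γ Δ : MGraph} (φ : Hom Γ Δ) (s : Γ.E × Bool) :
    stepSrc Δ (φ.mapStep s) = φ.onV (stepSrc Γ s) := by
  obtain ⟨e, b⟩ := s
  cases b <;> simp [stepSrc, Hom.mapStep, φ.map_ι, φ.map_τ]

theorem Hom.stepTgt_map {Γ Δ : MGraph} (φ : Hom Γ Δ) (s : Γ.E × Bool) :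
    stepTgt Δ (φ.mapStep s) = φ.onV (stepTgt Γ s) := by
  obtain ⟨e, b⟩ := s
  cases b <;> simp [stepTgt, Hom.mapStep, φ.map_ι, φ.map_τ]

theorem Hom.chain_map {Γ Δ : MGraph} (φ : Hom Γ Δ) (l : List (Γ.E × Bool)) (v : Γ.V)
    (h : chain Γ v l) : chain Δ (φ.onV v) (l.map φ.mapStep) := by
  induction l generalizing v with
  | nil => trivial
  | cons s rest ih =>
    exact ⟨by rw [φ.stepSrc_map, h.1], by rw [φ.stepTgt_map]; exact ih _ h.2⟩

/-- The image of a walk under a homomorphism (edge-by-edge, preserving directions). -/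
def Walk.map {Γ Δ : MGraph} (φ : Hom Γ Δ) (w : Walk Γ) : Walk Δ :=
  ⟨φ.onV w.first, w.steps.map φ.mapStep, φ.chain_map w.steps w.first w.ok⟩

theorem endOf_map {Γ Δ : MGraph} (φ : Hom Γ Δ) (l : List (Γ.E × Bool)) (v : Γ.V) :
    endOf Δ (φ.onV v) (l.map φ.mapStep) = φ.onV (endOf Γ v l) := by
  induction l generalizing v with
  | nil => rfl
  | cons s rest ih =>
    show endOf Δ (stepTgt Δ (φ.mapStep s)) (rest.map φ.mapStep) = _
    rw [φ.stepTgt_map]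
    exact ih _

theorem chain_append (Γ : MGraph) (l₁ l₂ : List (Γ.E × Bool)) (v : Γ.V)
    (h₁ : chain Γ v l₁) (h₂ : chain Γ (endOf Γ v l₁) l₂) : chain Γ v (l₁ ++ l₂) := by
  induction l₁ generalizing v with
  | nil => exact h₂
  | cons s rest ih => exact ⟨h₁.1, ih _ h₁.2 h₂⟩

theorem endOf_append (Γ : MGraph) (l₁ l₂ : List (Γ.E × Bool)) (v : Γ.V) :
    endOf Γ v (l₁ ++ l₂) = endOf Γ (endOf Γ v l₁) l₂ := by
  induction l₁ generalizing v with
  | nil => rfl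
  | cons s rest ih => exact ih _

/-- Concatenation of walks. -/
def Walk.append {Γ : MGraph} (w₁ w₂ : Walk Γ) (h : w₁.last = w₂.first) : Walk Γ :=
  ⟨w₁.first, w₁.steps ++ w₂.steps, chain_append Γ _ _ _ w₁.ok (by rw [show endOf Γ w₁.first w₁.steps = w₂.first from h]; exact w₂.ok)⟩

theorem Walk.append_last {Γ : MGraph} (w₁ w₂ : Walk Γ) (h : w₁.last = w₂.first) :
    (w₁.append w₂ h).last = w₂.last := by
  show endOf Γ w₁.first (w₁.steps ++ w₂.steps) = _
  rw [endOf_append, show endOf Γ w₁.first w₁.steps = w₂.first from h]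
  rfl

theorem Reachable.trans {Γ : MGraph} {u v w : Γ.V}
    (h₁ : Reachable Γ u v) (h₂ : Reachable Γ v w) : Reachable Γ u w := by
  obtain ⟨p, hp1, hp2⟩ := h₁
  obtain ⟨q, hq1, hq2⟩ := h₂
  exact ⟨p.append q (by rw [hp2, hq1]), hp1, by rw [Walk.append_last]; exact hq2⟩

/-- A single forward step along an edge, as a walk. -/
def Walk.single {Γ : MGraph} (e : Γ.E) : Walk Γ :=
  ⟨Γ.ι e, [(e, true)], ⟨rfl, trivial⟩⟩

def flipStep {Γ : MGraph} (s : Γ.E × Bool) : Γ.E × Bool := (s.1, !s.2)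

theorem stepSrc_flip (Γ : MGraph) (s : Γ.E × Bool) : stepSrc Γ (flipStep s) = stepTgt Γ s := by
  obtain ⟨e, b⟩ := s; cases b <;> rfl

theorem stepTgt_flip (Γ : MGraph) (s : Γ.E × Bool) : stepTgt Γ (flipStep s) = stepSrc Γ s := by
  obtain ⟨e, b⟩ := s; cases b <;> rfl

theorem endOf_reverse (Γ : MGraph) (l : List (Γ.E × Bool)) (v : Γ.V) (h : chain Γ v l) :
    endOf Γ (endOf Γ v l) (l.reverse.map flipStep) = v := by
  induction l generalizing v with
  | nil => rfl
  | cons s rest ih =>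
    rw [List.reverse_cons, List.map_append]
    show endOf Γ (endOf Γ (stepTgt Γ s) rest) ((rest.reverse.map flipStep) ++ [flipStep s]) = v
    rw [endOf_append, ih _ h.2]
    show stepTgt Γ (flipStep s) = v
    rw [stepTgt_flip]; exact h.1

theorem chain_reverse (Γ : MGraph) (l : List (Γ.E × Bool)) (v : Γ.V) (h : chain Γ v l) :
    chain Γ (endOf Γ v l) (l.reverse.map flipStep) := by
  induction l generalizing v with
  | nil => trivial
  | cons s rest ih =>
    rw [List.reverse_cons, List.map_append]
    show chain Γ (endOf Γ (stepTgt Γ s) rest) _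
    refine chain_append Γ _ _ _ (ih _ h.2) ?_
    rw [endOf_reverse Γ rest _ h.2]
    exact ⟨by rw [stepSrc_flip], trivial⟩

/-- The reversal of a walk. -/
def Walk.reverse {Γ : MGraph} (w : Walk Γ) : Walk Γ :=
  ⟨w.last, w.steps.reverse.map flipStep, chain_reverse Γ w.steps w.first w.ok⟩

theorem Walk.reverse_last {Γ : MGraph} (w : Walk Γ) : w.reverse.last = w.first :=
  endOf_reverse Γ w.steps w.first w.ok

theorem Reachable.refl' (Γ : MGraph) (v : Γ.V) : Reachable Γ v v :=
  ⟨⟨v, [], trivial⟩, rfl, rfl⟩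

theorem Reachable.symm' {Γ : MGraph} {u v : Γ.V} (h : Reachable Γ u v) : Reachable Γ v u := by
  obtain ⟨p, h1, h2⟩ := h
  exact ⟨p.reverse, by rw [show p.reverse.first = p.last from rfl, h2],
    by rw [p.reverse_last, h1]⟩

/-- The connected-component equivalence on vertices. -/
def reachSetoid (Γ : MGraph) : Setoid Γ.V where
  r := Reachable Γ
  iseqv := ⟨Reachable.refl' Γ, Reachable.symm', Reachable.trans⟩

/-! ### Subgraphs, trees, lifts -/

/-- A subgraph of a graph. -/
structure Subgraph (Γ : MGraph) where
  verts : Set Γ.V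
  edges : Set Γ.E
  ι_mem : ∀ e ∈ edges, Γ.ι e ∈ verts
  τ_mem : ∀ e ∈ edges, Γ.τ e ∈ verts

/-- The graph determined by a subgraph. -/
def Subgraph.toMGraph {Γ : MGraph} (H : Subgraph Γ) : MGraph where
  V := ↥H.verts
  E := ↥H.edges
  ι e := ⟨Γ.ι e.1, H.ι_mem e.1 e.2⟩
  τ e := ⟨Γ.τ e.1, H.τ_mem e.1 e.2⟩

/-- The inclusion homomorphism of a subgraph. -/
def Subgraph.incl {Γ : MGraph} (H : Subgraph Γ) : Hom H.toMGraph Γ :=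
  ⟨fun v => v.1, fun e => e.1, fun _ => rfl, fun _ => rfl⟩

/-- The set of endpoints of a set of edges. -/
def endpoints (Γ : MGraph) (S : Set Γ.E) : Set Γ.V := {v | ∃ e ∈ S, Γ.ι e = v ∨ Γ.τ e = v}

/-- The subgraph induced by a set of edges. -/
def edgeInduced (Γ : MGraph) (S : Set Γ.E) : Subgraph Γ where
  verts := endpoints Γ S
  edges := S
  ι_mem e he := ⟨e, he, Or.inl rfl⟩
  τ_mem e he := ⟨e, he, Or.inr rfl⟩

/-- The list of vertices visited when traversing a list of steps from a vertex. -/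
def vertsOf (Γ : MGraph) : Γ.V → List (Γ.E × Bool) → List Γ.V
  | v, [] => [v]
  | v, s :: rest => v :: vertsOf Γ (stepTgt Γ s) rest

/-- A path: a walk with no repeated edge and no repeated vertex
(except possibly the initial and terminal vertex coinciding). -/
def Walk.IsPath {Γ : MGraph} (w : Walk Γ) : Prop :=
  (w.steps.map Prod.fst).Nodup ∧
  (vertsOf Γ w.first w.steps).dropLast.Nodup ∧
  (vertsOf Γ w.first w.steps).tail.Nodup

/-- A cyclic walk: terminal vertex equals initial vertex. -/
def Walk.IsCyclic {Γ : MGraph} (w : Walk Γ) : Prop := w.last = w.first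

/-- A graph is acyclic if it has no nontrivial cyclic path. -/
def Acyclic (Γ : MGraph) : Prop :=
  ¬ ∃ w : Walk Γ, w.steps ≠ [] ∧ w.IsCyclic ∧ w.IsPath

/-- A spanning tree set: an edge set inducing an acyclic connected subgraph
containing all vertices. -/
def IsSpanningTreeSet (Δ : MGraph) (S : Set Δ.E) : Prop :=
  Acyclic (edgeInduced Δ S).toMGraph ∧ Connected (edgeInduced Δ S).toMGraph ∧
  ∀ v : Δ.V, v ∈ endpoints Δ S

/-- A lift of `Δ` with respect to a covering `φ : Γ → Δ`: a connected subgraph of `Γ`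
on whose edges `φ` restricts to a bijection onto the edges of `Δ`. -/
def IsLift {Γ Δ : MGraph} (φ : Hom Γ Δ) (Λ : Subgraph Γ) : Prop :=
  Connected Λ.toMGraph ∧ Set.BijOn φ.onE Λ.edges Set.univ

/-- A proper lift, with designated edge set `S₀` lifting a spanning tree set of `Δ`:
every edge of the lift has its initial endpoint among the endpoints of `S₀`
(the interior vertices). -/
def IsProperLiftWith {Γ Δ : MGraph} (φ : Hom Γ Δ) (Λ : Subgraph Γ) (S₀ : Set Γ.E) : Prop :=
  IsLift φ Λ ∧ S₀ ⊆ Λ.edges ∧ IsSpanningTreeSet Δ (φ.onE '' S₀) ∧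
  ∀ e ∈ Λ.edges, Γ.ι e ∈ endpoints Γ S₀

/-- A proper lift. -/
def IsProperLift {Γ Δ : MGraph} (φ : Hom Γ Δ) (Λ : Subgraph Γ) : Prop :=
  ∃ S₀ : Set Γ.E, IsProperLiftWith φ Λ S₀

/-! ### Voltage graphs -/

/-- The voltage of a walk: the ordered product of the voltages of its edges,
inverted when an edge is traversed against its orientation. -/
def voltage {Δ : MGraph} {G : Type} [Group G] (γ : Δ.E → G) (w : Walk Δ) : G :=
  (w.steps.map fun s => cond s.2 (γ s.1) (γ s.1)⁻¹).prod

/-- The derived graph of a voltage graph `(Δ, γ)`. -/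
def derivedGraph (Δ : MGraph) {G : Type} [Group G] (γ : Δ.E → G) : MGraph where
  V := Δ.V × G
  E := Δ.E × G
  ι e := (Δ.ι e.1, e.2)
  τ e := (Δ.τ e.1, e.2 * γ e.1)

/-- The canonical covering of a derived graph onto its base. -/
def derivedProj (Δ : MGraph) {G : Type} [Group G] (γ : Δ.E → G) : Hom (derivedGraph Δ γ) Δ :=
  ⟨Prod.fst, Prod.fst, fun _ => rfl, fun _ => rfl⟩

/-- Restriction of a voltage assignment to the subgroup generated by its values. -/
def restrictToClosure {G : Type} [Group G] {α : Type} (γ : α → G) :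
    α → Subgroup.closure (Set.range γ) :=
  fun a => ⟨γ a, Subgroup.subset_closure (Set.mem_range_self a)⟩

/-- The connected component of a vertex, as a subgraph. -/
def componentOf (Γ : MGraph) (v : Γ.V) : Subgraph Γ where
  verts := {u | Reachable Γ v u}
  edges := {e | Reachable Γ v (Γ.ι e)}
  ι_mem e he := he
  τ_mem e he := Reachable.trans he ⟨Walk.single e, rfl, rfl⟩

/-- `γ'` is the condensation of `γ` with respect to the spanning tree set `S` and the base
vertex `v₀`: edges of `S` get the identity, and an edge `e ∉ S` gets the voltage of the
return walk of `e` from `v₀` via `S`. -/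
def IsCondensation {Δ : MGraph} {G : Type} [Group G] (γ : Δ.E → G) (S : Set Δ.E)
    (v₀ : Δ.V) (γ' : Δ.E → G) : Prop :=
  (∀ e ∈ S, γ' e = 1) ∧
  ∀ e ∉ S, ∃ p₁ p₂ : Walk Δ,
    p₁.first = v₀ ∧ p₁.last = Δ.ι e ∧ p₂.first = Δ.τ e ∧ p₂.last = v₀ ∧
    p₁.IsPath ∧ p₂.IsPath ∧
    (∀ s ∈ p₁.steps, s.1 ∈ S) ∧ (∀ s ∈ p₂.steps, s.1 ∈ S) ∧
    γ' e = voltage γ p₁ * γ e * voltage γ p₂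

/-- `γ` is the voltage assignment on `Δ` with respect to the proper lift `Λ` (with interior
determined by `S₀`): interior edges of the lift give voltage `1`, and a boundary edge with
terminal endpoint in `g · V_Λ⁰` gives voltage `g`. -/
def IsVoltageWrt {Γ Δ : MGraph} (φ : Hom Γ Δ) (Λ : Subgraph Γ) (S₀ : Set Γ.E)
    (γ : Δ.E → Aut Γ) : Prop :=
  (∀ eΔ : Δ.E, γ eΔ ∈ coverGroup φ) ∧
  ∀ e ∈ Λ.edges,
    (Γ.τ e ∈ endpoints Γ S₀ → γ (φ.onE e) = 1) ∧
    (Γ.τ e ∉ endpoints Γ S₀ → Γ.τ e ∈ (γ (φ.onE e)).onV '' endpoints Γ S₀)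

/-- A good covering of a voltage graph: every cyclic walk of trivial voltage lifts
only to cyclic walks. -/
def IsGoodCovering {Δ Δtop : MGraph} {G : Type} [Group G] (γ : Δ.E → G)
    (μ : Hom Δtop Δ) : Prop :=
  ∀ p : Walk Δ, p.IsCyclic → voltage γ p = 1 →
    ∀ q : Walk Δtop, Walk.map μ q = p → q.IsCyclic

/-! ### Product graphs and common covers -/

/-- The product of two graphs. -/
def prodGraph (Δ₁ Δ₂ : MGraph) : MGraph where
  V := Δ₁.V × Δ₂.V
  E := Δ₁.E × Δ₂.E
  ι e := (Δ₁.ι e.1, Δ₂.ι e.2)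
  τ e := (Δ₁.τ e.1, Δ₂.τ e.2)

/-- First coordinate projection from a subgraph of a product graph. -/
def sgProj₁ {Δ₁ Δ₂ : MGraph} (H : Subgraph (prodGraph Δ₁ Δ₂)) : Hom H.toMGraph Δ₁ where
  onV v := (v.1 : Δ₁.V × Δ₂.V).1
  onE e := (e.1 : Δ₁.E × Δ₂.E).1
  map_ι e := rfl
  map_τ e := rfl

/-- Second coordinate projection from a subgraph of a product graph. -/
def sgProj₂ {Δ₁ Δ₂ : MGraph} (H : Subgraph (prodGraph Δ₁ Δ₂)) : Hom H.toMGraph Δ₂ where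
  onV v := (v.1 : Δ₁.V × Δ₂.V).2
  onE e := (e.1 : Δ₁.E × Δ₂.E).2
  map_ι e := rfl
  map_τ e := rfl

/-- A good common cover of two voltage graphs: a connected subgraph of the product graph
whose coordinate projections are coverings, each a good covering of the respective
voltage graph. -/
def IsGoodCommonCover {Δ₁ Δ₂ : MGraph} {K₁ K₂ : Type} [Group K₁] [Group K₂]
    (γ₁ : Δ₁.E → K₁) (γ₂ : Δ₂.E → K₂) (H : Subgraph (prodGraph Δ₁ Δ₂)) : Prop :=
  Connected H.toMGraph ∧
  IsCovering (sgProj₁ H) ∧ IsCovering (sgProj₂ H) ∧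
  IsGoodCovering γ₁ (sgProj₁ H) ∧ IsGoodCovering γ₂ (sgProj₂ H)

/-- A successful good common cover: both projections are regular, and there is an
automorphism `α` of the cover fixing a spanning tree set `S_⊤` such that the
correspondence between the condensed lifted voltages (via `α`) extends to a group
isomorphism of the generated voltage groups. -/
def IsSuccessfulGoodCommonCover {Δ₁ Δ₂ : MGraph} {K₁ K₂ : Type} [Group K₁] [Group K₂]
    (γ₁ : Δ₁.E → K₁) (γ₂ : Δ₂.E → K₂) (H : Subgraph (prodGraph Δ₁ Δ₂)) : Prop :=
  IsGoodCommonCover γ₁ γ₂ H ∧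
  IsRegular (sgProj₁ H) ∧ IsRegular (sgProj₂ H) ∧
  ∃ (Stop : Set H.toMGraph.E) (vtop : H.toMGraph.V)
    (γ₁' : H.toMGraph.E → K₁) (γ₂' : H.toMGraph.E → K₂) (α : Aut H.toMGraph),
    IsSpanningTreeSet H.toMGraph Stop ∧
    IsCondensation (fun e => γ₁ ((sgProj₁ H).onE e)) Stop vtop γ₁' ∧
    IsCondensation (fun e => γ₂ ((sgProj₂ H).onE e)) Stop vtop γ₂' ∧
    (∀ e ∈ Stop, α.onE e = e) ∧
    ∃ F : ↥(Subgroup.closure (Set.range γ₁')) ≃* ↥(Subgroup.closure (Set.range γ₂')),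
      ∀ e : H.toMGraph.E, (F (restrictToClosure γ₁' e) : K₂) = γ₂' (α.onE e)

/-- A good common cover with regular projections fails if it is not successful. -/
def FailsAsCommonCover {Δ₁ Δ₂ : MGraph} {K₁ K₂ : Type} [Group K₁] [Group K₂]
    (γ₁ : Δ₁.E → K₁) (γ₂ : Δ₂.E → K₂) (H : Subgraph (prodGraph Δ₁ Δ₂)) : Prop :=
  IsGoodCommonCover γ₁ γ₂ H ∧
  IsRegular (sgProj₁ H) ∧ IsRegular (sgProj₂ H) ∧
  ¬ IsSuccessfulGoodCommonCover γ₁ γ₂ H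


/-!
An isomorphism `ψ` of derived graphs over `Δ` is the same as a family of bijections
`f_v : G₁ → G₂` of the fibres with `f_{τ e} (g γ₁(e)) = f_{ι e} (g) γ₂(e)`. On the edges of `S`
both voltages are trivial, so `f_{ι e} = f_{τ e}`; as `S` connects all vertices, every `f_v` is
one map `f`. Then `f` intertwines right multiplication by `γ₁(e)` with right multiplication by
`γ₂(e)`, and since the `γ₁(e)` generate `G₁`, `g ↦ f(1)⁻¹ f(g)` is the required isomorphism.
Conversely an isomorphism `F` gives `(x, g) ↦ (x, F g)`.
-/

theorem Hom.ext {Γ Δ : MGraph} {f g : Hom Γ Δ} (hV : f.onV = g.onV) (hE : f.onE = g.onE) :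
    f = g := by
  cases f; cases g; cases hV; cases hE; rfl

section Walks

variable {Γ : MGraph} {X : Sort*} (F : Γ.V → X)

theorem apply_stepTgt_eq_apply_stepSrc (hF : ∀ e, F (Γ.ι e) = F (Γ.τ e)) (s : Γ.E × Bool) :
    F (stepTgt Γ s) = F (stepSrc Γ s) := by
  obtain ⟨e, _ | _⟩ := s
  exacts [hF e, (hF e).symm]

theorem apply_endOf_eq_of_forall_edge (hF : ∀ e, F (Γ.ι e) = F (Γ.τ e)) :
    ∀ (l : List (Γ.E × Bool)) (v : Γ.V), chain Γ v l → F (endOf Γ v l) = F v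
  | [], _, _ => rfl
  | s :: rest, v, ⟨hsrc, hrest⟩ => by
    rw [endOf, apply_endOf_eq_of_forall_edge hF rest _ hrest,
      apply_stepTgt_eq_apply_stepSrc F hF, hsrc]

theorem Connected.apply_eq_of_forall_edge (hΓ : Connected Γ)
    (hF : ∀ e, F (Γ.ι e) = F (Γ.τ e)) (u v : Γ.V) : F u = F v := by
  obtain ⟨w, rfl, rfl⟩ := hΓ u v
  exact (apply_endOf_eq_of_forall_edge F hF w.steps w.first w.ok).symm

end Walks

theorem apply_eq_of_forall_edge_mem {Δ : MGraph} {S : Set Δ.E} {X : Sort*}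
    (hconn : Connected (edgeInduced Δ S).toMGraph) (hspan : ∀ v, v ∈ endpoints Δ S)
    (F : Δ.V → X) (hF : ∀ e ∈ S, F (Δ.ι e) = F (Δ.τ e)) (u v : Δ.V) : F u = F v :=
  hconn.apply_eq_of_forall_edge (fun x : endpoints Δ S => F x) (fun e => hF e.1 e.2)
    ⟨u, hspan u⟩ ⟨v, hspan v⟩

section GroupLemmas

variable {G H ι : Type*} [Group G] [Group H]

theorem map_mul_of_map_mul_generator {γ : ι → G} {δ : ι → H}
    (hγ : Subgroup.closure (Set.range γ) = ⊤) {f : G → H} (h1 : f 1 = 1)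
    (hf : ∀ g i, f (g * γ i) = f g * δ i) (a b : G) : f (a * b) = f a * f b := by
  have hf_inv : ∀ g i, f (g * (γ i)⁻¹) = f g * (δ i)⁻¹ := fun g i =>
    eq_mul_inv_of_mul_eq (by rw [← hf, inv_mul_cancel_right])
  have hb : b ∈ Subgroup.closure (Set.range γ) := hγ ▸ Subgroup.mem_top b
  induction hb using Subgroup.closure_induction_right generalizing a with
  | one => rw [mul_one, h1, mul_one]
  | mul_right x _ y hy ih =>
    obtain ⟨i, rfl⟩ := hy
    rw [← mul_assoc, hf, ih, hf, mul_assoc]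
  | mul_inv_cancel x _ y hy ih =>
    obtain ⟨i, rfl⟩ := hy
    rw [← mul_assoc, hf_inv, ih, hf_inv, mul_assoc]

theorem exists_mulEquiv_of_bijective_map_mul_generator {γ : ι → G} {δ : ι → H}
    (hγ : Subgroup.closure (Set.range γ) = ⊤) {f : G → H} (hbij : Function.Bijective f)
    (hf : ∀ g i, f (g * γ i) = f g * δ i) : ∃ F : G ≃* H, ∀ i, F (γ i) = δ i := by
  set f₀ : G → H := fun g => (f 1)⁻¹ * f g
  have h1 : f₀ 1 = 1 := inv_mul_cancel (f 1)
  have hf₀ : ∀ g i, f₀ (g * γ i) = f₀ g * δ i := fun g i => by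
    simp only [f₀, hf, mul_assoc]
  have hmul := map_mul_of_map_mul_generator hγ h1 hf₀
  refine ⟨MulEquiv.ofBijective (MonoidHom.mk' f₀ hmul)
    ((Equiv.mulLeft (f 1)⁻¹).bijective.comp hbij), fun i => ?_⟩
  change f₀ (γ i) = δ i
  rw [← one_mul (γ i), hf₀, h1, one_mul]

theorem subsingleton_of_closure_range_eq_top [IsEmpty ι] {γ : ι → G}
    (hγ : Subgroup.closure (Set.range γ) = ⊤) : Subsingleton G :=
  Subgroup.subsingleton_iff.mp <| subsingleton_of_bot_eq_top <| by
    rw [← hγ, Set.range_eq_empty, Subgroup.closure_empty]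

theorem exists_mulEquiv_of_isEmpty [IsEmpty ι] {γ : ι → G} {δ : ι → H}
    (hγ : Subgroup.closure (Set.range γ) = ⊤) (hδ : Subgroup.closure (Set.range δ) = ⊤) :
    ∃ F : G ≃* H, ∀ i, F (γ i) = δ i := by
  have := subsingleton_of_closure_range_eq_top hγ
  have := subsingleton_of_closure_range_eq_top hδ
  have : Unique G := uniqueOfSubsingleton 1
  have : Unique H := uniqueOfSubsingleton 1
  exact ⟨MulEquiv.ofUnique, isEmptyElim⟩

end GroupLemmas

section DerivedGraph

variable {Δ : MGraph} {G₁ G₂ : Type} [Group G₁] [Group G₂] {γ₁ : Δ.E → G₁} {γ₂ : Δ.E → G₂}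

theorem derivedProj_comp_eq_derivedProj_iff (ψ : Iso (derivedGraph Δ γ₁) (derivedGraph Δ γ₂)) :
    (derivedProj Δ γ₂).comp ψ.toHom = derivedProj Δ γ₁ ↔
      (∀ x : Δ.V × G₁, (ψ.onV x).1 = x.1) ∧ ∀ x : Δ.E × G₁, (ψ.onE x).1 = x.1 :=
  ⟨fun h => ⟨congrFun (congrArg Hom.onV h), congrFun (congrArg Hom.onE h)⟩,
    fun ⟨hV, hE⟩ => Hom.ext (funext hV) (funext hE)⟩

def derivedGraphIsoOfMulEquiv (F : G₁ ≃* G₂) (hF : ∀ e, F (γ₁ e) = γ₂ e) :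
    Iso (derivedGraph Δ γ₁) (derivedGraph Δ γ₂) where
  onV := Equiv.prodCongr (Equiv.refl Δ.V) F.toEquiv
  onE := Equiv.prodCongr (Equiv.refl Δ.E) F.toEquiv
  map_ι _ := rfl
  map_τ x := Prod.ext rfl <| by
    change F x.2 * γ₂ x.1 = F (x.2 * γ₁ x.1)
    rw [map_mul, hF]

theorem derivedProj_comp_derivedGraphIsoOfMulEquiv (F : G₁ ≃* G₂) (hF : ∀ e, F (γ₁ e) = γ₂ e) :
    (derivedProj Δ γ₂).comp (derivedGraphIsoOfMulEquiv F hF).toHom = derivedProj Δ γ₁ :=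
  Hom.ext rfl rfl

def fibreMap (ψ : Iso (derivedGraph Δ γ₁) (derivedGraph Δ γ₂)) (v : Δ.V) (g : G₁) : G₂ :=
  (ψ.onV (v, g)).2

variable {ψ : Iso (derivedGraph Δ γ₁) (derivedGraph Δ γ₂)}

theorem fibreMap_bijective (hV : ∀ x : Δ.V × G₁, (ψ.onV x).1 = x.1) (v : Δ.V) :
    Function.Bijective (fibreMap ψ v) := by
  constructor
  · intro a b hab
    have : ψ.onV (v, a) = ψ.onV (v, b) := Prod.ext ((hV (v, a)).trans (hV (v, b)).symm) hab
    exact congrArg Prod.snd (ψ.onV.injective this)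
  · intro k
    obtain ⟨⟨w, g⟩, hwg⟩ := ψ.onV.surjective (v, k)
    obtain rfl : w = v := (hV (w, g)).symm.trans (congrArg Prod.fst hwg)
    exact ⟨g, congrArg Prod.snd hwg⟩

/-- The edge `(e, g)` runs from `(ι e, g)` to `(τ e, g γ₁ e)`; its image under `ψ` lies over `e`,
so it runs from some `(ι e, h)` to `(τ e, h γ₂ e)`. -/
theorem fibreMap_mul_voltage (hE : ∀ x : Δ.E × G₁, (ψ.onE x).1 = x.1) (e : Δ.E) (g : G₁) :
    fibreMap ψ (Δ.τ e) (g * γ₁ e) = fibreMap ψ (Δ.ι e) g * γ₂ e := by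
  have hι : (ψ.onE (e, g)).2 = fibreMap ψ (Δ.ι e) g := congrArg Prod.snd (ψ.map_ι (e, g))
  have hτ : (ψ.onE (e, g)).2 * γ₂ (ψ.onE (e, g)).1 = fibreMap ψ (Δ.τ e) (g * γ₁ e) :=
    congrArg Prod.snd (ψ.map_τ (e, g))
  rw [← hτ, hE, hι]

end DerivedGraph

theorem derived_iso_over_base_iff_voltage_group_iso_general {Δ : MGraph}
    {G₁ G₂ : Type} [Group G₁] [Group G₂]
    (γ₁ : Δ.E → G₁) (γ₂ : Δ.E → G₂)
    (hg₁ : Subgroup.closure (Set.range γ₁) = ⊤)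
    (hg₂ : Subgroup.closure (Set.range γ₂) = ⊤)
    (S : Set Δ.E) (hS : IsSpanningTreeSet Δ S)
    (hc₁ : ∀ e ∈ S, γ₁ e = 1) (hc₂ : ∀ e ∈ S, γ₂ e = 1) :
    (∃ ψ : Iso (derivedGraph Δ γ₁) (derivedGraph Δ γ₂),
      (derivedProj Δ γ₂).comp ψ.toHom = derivedProj Δ γ₁) ↔
    (∃ F : G₁ ≃* G₂, ∀ e : Δ.E, F (γ₁ e) = γ₂ e) := by
  refine ⟨fun ⟨ψ, hψ⟩ => ?_, fun ⟨F, hF⟩ =>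
    ⟨derivedGraphIsoOfMulEquiv F hF, derivedProj_comp_derivedGraphIsoOfMulEquiv F hF⟩⟩
  obtain ⟨hV, hE⟩ := (derivedProj_comp_eq_derivedProj_iff ψ).mp hψ
  rcases isEmpty_or_nonempty Δ.V with hΔV | ⟨⟨v₀⟩⟩
  · have : IsEmpty Δ.E := Function.isEmpty Δ.ι
    exact exists_mulEquiv_of_isEmpty hg₁ hg₂
  have htree : ∀ e ∈ S, fibreMap ψ (Δ.ι e) = fibreMap ψ (Δ.τ e) := fun e he => funext fun g => by
    simpa only [hc₁ e he, hc₂ e he, mul_one] using (fibreMap_mul_voltage hE e g).symm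
  have hfibre : ∀ v, fibreMap ψ v = fibreMap ψ v₀ := fun v =>
    apply_eq_of_forall_edge_mem hS.2.1 hS.2.2 (fibreMap ψ) htree v v₀
  refine exists_mulEquiv_of_bijective_map_mul_generator hg₁ (fibreMap_bijective hV v₀)
    fun g e => ?_
  simpa only [hfibre] using fibreMap_mul_voltage hE e g

/-- Let `Δ` be a finite connected graph with voltage assignments
`γᵢ : E_Δ → Gᵢ` (`i = 1, 2`), condensed with respect to the same spanning tree set
`S`, whose values generate `Gᵢ`.  There is a graph isomorphism
`ψ : Δ ×_{γ₁} G₁ → Δ ×_{γ₂} G₂` with `φ₂ ∘ ψ = φ₁` if and only if the correspondence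
`γ₁(e) ↦ γ₂(e)` extends to a group isomorphism of `G₁` onto `G₂`. -/
theorem derived_iso_over_base_iff_voltage_group_iso {Δ : MGraph}
    [Finite Δ.V] [Finite Δ.E] (hΔ : Connected Δ)
    {G₁ G₂ : Type} [Group G₁] [Group G₂]
    (γ₁ : Δ.E → G₁) (γ₂ : Δ.E → G₂)
    (hg₁ : Subgroup.closure (Set.range γ₁) = ⊤)
    (hg₂ : Subgroup.closure (Set.range γ₂) = ⊤)
    (S : Set Δ.E) (hS : IsSpanningTreeSet Δ S)
    (hc₁ : ∀ e ∈ S, γ₁ e = 1) (hc₂ : ∀ e ∈ S, γ₂ e = 1) :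
    (∃ ψ : Iso (derivedGraph Δ γ₁) (derivedGraph Δ γ₂),
      (derivedProj Δ γ₂).comp ψ.toHom = derivedProj Δ γ₁) ↔
    (∃ F : G₁ ≃* G₂, ∀ e : Δ.E, F (γ₁ e) = γ₂ e) :=
  derived_iso_over_base_iff_voltage_group_iso_general γ₁ γ₂ hg₁ hg₂ S hS hc₁ hc₂

end VG
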